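/- arXiv:math/0105240 — 2 statements merged into one kernel-verified Lean document; each statement's English description precedes it below -/
import Mathlib

section
/- The Airy kernel admits the Christoffel–Darboux type representation: for u ≠ v, ∫_{-∞}^{0} Ai(u-λ) Ai(v-λ) dλ = (Ai(u) Ai'(v) - Ai'(u) Ai(v)) / (u - v). -/
/-!
Write `W(a, b) = f a f'(b) - f'(a) f b`. Differentiating `t ↦ W(u - t, v - t)` leaves only the
second-derivative terms, and for a solution of `f'' = x f` these combine to
`(u - v) f(u - t) f(v - t)`. The decay of `f` and `f'` at `+∞` makes `W(u - t, v - t)` vanish as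
`t → -∞`, so the fundamental theorem of calculus on `(-∞, 0]` gives
`(u - v) ∫ f(u - t) f(v - t) dt = W(u, v)`.
-/

open Filter Topology MeasureTheory

noncomputable def crossWronskian (f : ℝ → ℝ) (a b : ℝ) : ℝ := f a * deriv f b - deriv f a * f b

section CrossWronskian

variable {f : ℝ → ℝ}

theorem hasDerivAt_crossWronskian_sub (hf : Differentiable ℝ f)
    (hf' : Differentiable ℝ (deriv f)) (u v t : ℝ) :
    HasDerivAt (fun s => crossWronskian f (u - s) (v - s))
      (deriv (deriv f) (u - t) * f (v - t) - f (u - t) * deriv (deriv f) (v - t)) t := by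
  have hcomp : ∀ {g : ℝ → ℝ}, Differentiable ℝ g → ∀ c : ℝ,
      HasDerivAt (fun s => g (c - s)) (-deriv g (c - t)) t :=
    fun hg c => (hg (c - t)).hasDerivAt.comp_const_sub c t
  exact (((hcomp hf u).mul (hcomp hf' v)).sub ((hcomp hf' u).mul (hcomp hf v))).congr_deriv
    (by ring)

theorem hasDerivAt_crossWronskian_sub_of_airy (hf : Differentiable ℝ f)
    (hf' : Differentiable ℝ (deriv f)) (hODE : ∀ x, deriv (deriv f) x = x * f x) (u v t : ℝ) :
    HasDerivAt (fun s => crossWronskian f (u - s) (v - s))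
      ((u - v) * (f (u - t) * f (v - t))) t := by
  convert hasDerivAt_crossWronskian_sub hf hf' u v t using 1
  rw [hODE, hODE]
  ring

theorem tendsto_crossWronskian_sub_atBot (hf : Tendsto f atTop (𝓝 0))
    (hf' : Tendsto (deriv f) atTop (𝓝 0)) (u v : ℝ) :
    Tendsto (fun t => crossWronskian f (u - t) (v - t)) atBot (𝓝 0) := by
  have hshift : ∀ c : ℝ, Tendsto (fun t : ℝ => c - t) atBot atTop := fun c => by
    simpa only [sub_eq_add_neg] using tendsto_atTop_add_const_left _ c tendsto_neg_atBot_atTop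
  have h := ((hf.comp (hshift u)).mul (hf'.comp (hshift v))).sub
    ((hf'.comp (hshift u)).mul (hf.comp (hshift v)))
  rw [mul_zero, sub_zero] at h
  exact h

end CrossWronskian

theorem tendsto_atTop_zero_of_abs_le_mul_exp_neg {f : ℝ → ℝ} {C : ℝ}
    (h : ∀ x, 0 ≤ x → |f x| ≤ C * Real.exp (-x)) : Tendsto f atTop (𝓝 0) := by
  have hexp : Tendsto (fun x => C * Real.exp (-x)) atTop (𝓝 0) := by
    simpa only [mul_zero] using Real.tendsto_exp_neg_atTop_nhds_zero.const_mul C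
  exact squeeze_zero_norm' (eventually_atTop.mpr ⟨0, h⟩) hexp

/-- Christoffel–Darboux representation of the Airy kernel: for `u ≠ v`,
`∫_{-∞}^0 Ai(u-λ) Ai(v-λ) dλ = (Ai(u) Ai'(v) - Ai'(u) Ai(v)) / (u - v)`. -/
theorem airy_kernel_christoffel_darboux (Ai : ℝ → ℝ) (hsmooth : ContDiff ℝ ⊤ Ai)
    (hODE : ∀ x : ℝ, deriv (deriv Ai) x = x * Ai x)
    (C : ℝ) (hdecay : ∀ x : ℝ, 0 ≤ x → |Ai x| ≤ C * Real.exp (-x))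
    (hdecay' : ∀ x : ℝ, 0 ≤ x → |deriv Ai x| ≤ C * Real.exp (-x))
    (hint : ∀ u v : ℝ,
      MeasureTheory.IntegrableOn (fun lam : ℝ => Ai (u - lam) * Ai (v - lam)) (Set.Iic 0))
    (u v : ℝ) (huv : u ≠ v) :
    ∫ lam in Set.Iic (0 : ℝ), Ai (u - lam) * Ai (v - lam)
      = (Ai u * deriv Ai v - deriv Ai u * Ai v) / (u - v) := by
  have hAi : Differentiable ℝ Ai := hsmooth.differentiable (by simp)
  have hAi' : Differentiable ℝ (deriv Ai) := (hsmooth.of_le le_top).differentiable_deriv_two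
  have hFTC := integral_Iic_of_hasDerivAt_of_tendsto'
    (fun t _ => hasDerivAt_crossWronskian_sub_of_airy hAi hAi' hODE u v t)
    ((hint u v).const_mul (u - v))
    (tendsto_crossWronskian_sub_atBot (tendsto_atTop_zero_of_abs_le_mul_exp_neg hdecay)
      (tendsto_atTop_zero_of_abs_le_mul_exp_neg hdecay') u v)
  rw [integral_const_mul, sub_zero, sub_zero, sub_zero] at hFTC
  rw [eq_div_iff (sub_ne_zero.mpr huv), mul_comm, hFTC, crossWronskian]
end

section
/- The discrete Bessel kernel B_t(i,j) = ∑_{l≤0} J_{i-l}(2t) J_{j-l}(2t) admits for i ≠ j the closed form B_t(i,j) = t (J_{i-1}(2t) J_j(2t) - J_i(2t) J_{j-1}(2t)) / (i - j). -/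
/-- Closed form of the discrete Bessel kernel: for `i ≠ j`,
`B_t(i,j) = ∑_{l≤0} J_{i-l}(2t) J_{j-l}(2t)
          = t (J_{i-1}(2t) J_j(2t) - J_i(2t) J_{j-1}(2t)) / (i - j)`. -/
theorem discrete_bessel_kernel_closed_form (J : ℤ → ℝ → ℝ) (t : ℝ) (ht : t ≠ 0)
    (hrec : ∀ n : ℤ, J (n - 1) (2 * t) + J (n + 1) (2 * t) = ((n : ℝ) / t) * J n (2 * t))
    (hsum : ∀ i j : ℤ,
      Summable (fun k : ℕ => J (i + (k : ℤ)) (2 * t) * J (j + (k : ℤ)) (2 * t)))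
    (hzero : ∀ i : ℤ, Filter.Tendsto (fun k : ℕ => J (i + (k : ℤ)) (2 * t))
      Filter.atTop (nhds 0))
    (i j : ℤ) (hij : i ≠ j) :
    ∑' k : ℕ, J (i + (k : ℤ)) (2 * t) * J (j + (k : ℤ)) (2 * t)
      = t * (J (i - 1) (2 * t) * J j (2 * t) - J i (2 * t) * J (j - 1) (2 * t)) / ((i : ℝ) - j) := by
  set F : ℕ → ℝ := fun k =>
    J (i + (k : ℤ) - 1) (2 * t) * J (j + (k : ℤ)) (2 * t)
      - J (i + (k : ℤ)) (2 * t) * J (j + (k : ℤ) - 1) (2 * t) with hF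
  have hij' : (i : ℝ) - (j : ℝ) ≠ 0 := by
    intro h
    apply hij
    exact_mod_cast sub_eq_zero.mp h
  -- pointwise telescoping identity
  have hpt : ∀ k : ℕ, (((i : ℝ) - j) / t) * (J (i + (k : ℤ)) (2 * t) * J (j + (k : ℤ)) (2 * t))
      = F k - F (k + 1) := by
    intro k
    have h1 := hrec (i + k)
    have h2 := hrec (j + k)
    have e1 : i + (k : ℤ) + 1 - 1 = i + (k : ℤ) := by ring
    have e2 : j + (k : ℤ) + 1 - 1 = j + (k : ℤ) := by ring
    simp only [hF]
    push_cast [e1, e2]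
    rw [show i + ((k:ℤ)+1) - 1 = i + k by ring, show j + ((k:ℤ)+1) - 1 = j + k by ring,
      show i + ((k:ℤ)+1) = i + k + 1 by ring, show j + ((k:ℤ)+1) = j + k + 1 by ring]
    have h1' : J (i + (k : ℤ) - 1) (2 * t) + J (i + (k : ℤ) + 1) (2 * t)
        = (((i : ℝ) + k) / t) * J (i + (k : ℤ)) (2 * t) := by
      convert h1 using 3 <;> push_cast <;> ring
    have h2' : J (j + (k : ℤ) - 1) (2 * t) + J (j + (k : ℤ) + 1) (2 * t)
        = (((j : ℝ) + k) / t) * J (j + (k : ℤ)) (2 * t) := by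
      convert h2 using 3 <;> push_cast <;> ring
    have expand : J (i + (k : ℤ) - 1) (2 * t) * J (j + (k : ℤ)) (2 * t)
        - J (i + (k : ℤ)) (2 * t) * J (j + (k : ℤ) - 1) (2 * t)
        - (J (i + (k : ℤ)) (2 * t) * J (j + (k : ℤ) + 1) (2 * t)
          - J (i + (k : ℤ) + 1) (2 * t) * J (j + (k : ℤ)) (2 * t))
        = (J (i + (k : ℤ) - 1) (2 * t) + J (i + (k : ℤ) + 1) (2 * t)) * J (j + (k : ℤ)) (2 * t)
          - J (i + (k : ℤ)) (2 * t) * (J (j + (k : ℤ) - 1) (2 * t) + J (j + (k : ℤ) + 1) (2 * t)) := by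
      ring
    rw [expand, h1', h2']
    field_simp
    ring
  -- summability of the scaled series
  have hs : Summable (fun k : ℕ => (((i : ℝ) - j) / t)
      * (J (i + (k : ℤ)) (2 * t) * J (j + (k : ℤ)) (2 * t))) := (hsum i j).mul_left _
  -- F tends to 0
  have hFlim : Filter.Tendsto F Filter.atTop (nhds 0) := by
    have h1 : Filter.Tendsto (fun k : ℕ => J (i + (k : ℤ) - 1) (2 * t) * J (j + (k : ℤ)) (2 * t))
        Filter.atTop (nhds 0) := by
      have := (hzero (i - 1)).mul (hzero j)
      simpa [mul_comm, add_sub_right_comm, add_comm, add_left_comm, sub_add_eq_add_sub] using this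
    have h2 : Filter.Tendsto (fun k : ℕ => J (i + (k : ℤ)) (2 * t) * J (j + (k : ℤ) - 1) (2 * t))
        Filter.atTop (nhds 0) := by
      have := (hzero i).mul (hzero (j - 1))
      simpa [mul_comm, add_sub_right_comm, add_comm, add_left_comm, sub_add_eq_add_sub] using this
    simpa using h1.sub h2
  -- partial sums telescope
  have hps : ∀ n : ℕ, ∑ k ∈ Finset.range n, (F k - F (k + 1)) = F 0 - F n := by
    intro n
    exact Finset.sum_range_sub' F n
  -- HasSum of scaled series to F 0
  have hHS : HasSum (fun k : ℕ => (((i : ℝ) - j) / t)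
      * (J (i + (k : ℤ)) (2 * t) * J (j + (k : ℤ)) (2 * t))) (F 0) := by
    rw [hs.hasSum_iff_tendsto_nat]
    have hlim2 : Filter.Tendsto (fun n => ∑ k ∈ Finset.range n, (F k - F (k + 1)))
        Filter.atTop (nhds (F 0)) := by
      simp only [hps]
      simpa using (Filter.Tendsto.const_sub (F 0) hFlim)
    refine hlim2.congr fun n => ?_
    exact Finset.sum_congr rfl fun k _ => (hpt k).symm
  have htsum : ∑' k : ℕ, (((i : ℝ) - j) / t)
      * (J (i + (k : ℤ)) (2 * t) * J (j + (k : ℤ)) (2 * t)) = F 0 := hHS.tsum_eq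
  rw [tsum_mul_left] at htsum
  have hF0 : F 0 = J (i - 1) (2 * t) * J j (2 * t) - J i (2 * t) * J (j - 1) (2 * t) := by
    simp [hF]
  rw [hF0] at htsum
  field_simp at htsum ⊢
  linarith [htsum]
end
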